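/- Let k ∈ ℝ and let f : ℝⁿ → ℝ be C³ on ℝⁿ \ {0} and positively homogeneous of degree k. Let v ≠ 0 with k · f(v) ≠ 0. Then for every X ∈ ℝⁿ, writing X₀ = X − (Df(v)(X)/(k · f(v))) · v, one has D³f(v)(X, X, X) = D³f(v)(X₀, X₀, X₀) + (3(k − 2)/(k · f(v))) · D²f(v)(X₀, X₀) · Df(v)(X) + ((k − 1)(k − 2)/(k · f(v))²) · (Df(v)(X))³. -/

import Mathlib

/-!
Differentiating `f (t • x) = t ^ k * f x` shows that `D^j f` is positively homogeneous of
degree `k - j`, so differentiating along the ray through `v` gives the Euler identities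
`D^(j+1) f(v) v = (k - j) • D^j f(v)`. Write `X = X₀ + c • v` with `c = Df(v) X / (k f(v))`, so
that `Df(v) X₀ = 0`; expanding the symmetric trilinear form `D³f(v)` at `X₀ + c • v`, every term
containing `v` collapses through the Euler identities.
-/

open Filter Topology ContinuousLinearMap

variable {E F : Type*} [NormedAddCommGroup E] [NormedSpace ℝ E]
  [NormedAddCommGroup F] [NormedSpace ℝ F]

def IsPosHomogeneous (k : ℝ) (f : E → F) : Prop :=
  ∀ t : ℝ, 0 < t → ∀ x : E, x ≠ 0 → f (t • x) = t ^ k • f x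

namespace IsPosHomogeneous

variable {k : ℝ} {f : E → F}

theorem fderiv_apply_self (hf : IsPosHomogeneous k f) {v : E} (hv : v ≠ 0)
    (hd : DifferentiableAt ℝ f v) : fderiv ℝ f v v = k • f v := by
  have hray : HasDerivAt (fun t : ℝ => f (t • v)) (fderiv ℝ f v v) 1 := by
    have hd' : HasFDerivAt f (fderiv ℝ f v) ((1 : ℝ) • v) := by
      rw [one_smul]; exact hd.hasFDerivAt
    simpa [Function.comp_def] using
      hd'.comp_hasDerivAt (1 : ℝ) ((hasDerivAt_id (1 : ℝ)).smul_const v)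
  have hpow : HasDerivAt (fun t : ℝ => t ^ k • f v) (k • f v) 1 := by
    simpa using (Real.hasDerivAt_rpow_const (Or.inl one_ne_zero)).smul_const (f v)
  refine hray.unique (hpow.congr_of_eventuallyEq ?_)
  filter_upwards [Ioi_mem_nhds one_pos] with t ht using hf t ht v hv

protected theorem fderiv (hf : IsPosHomogeneous k f) (hd : DifferentiableOn ℝ f {x | x ≠ 0}) :
    IsPosHomogeneous (k - 1) (fderiv ℝ f) := by
  intro t ht x hx
  have hscale : t • fderiv ℝ f (t • x) = t ^ k • fderiv ℝ f x := by
    rw [← fderiv_comp_smul, ← fderiv_const_smul (hd.differentiableAt (isOpen_ne.mem_nhds hx))]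
    refine EventuallyEq.fderiv_eq ?_
    filter_upwards [isOpen_ne.mem_nhds hx] with y hy using hf t ht y hy
  rw [Real.rpow_sub_one ht.ne', div_eq_inv_mul, mul_smul, ← hscale, smul_smul,
    inv_mul_cancel₀ ht.ne', one_smul]

end IsPosHomogeneous

theorem iteratedFDeriv_three_apply (f : E → F) (z : E) (m : Fin 3 → E) :
    iteratedFDeriv ℝ 3 f z m = fderiv ℝ (fderiv ℝ (fderiv ℝ f)) z (m 0) (m 1) (m 2) := by
  rw [iteratedFDeriv_succ_apply_right, iteratedFDeriv_two_apply]
  rfl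

namespace ContDiffAt

variable {f : E → F} {x : E}

theorem fderiv_fderiv_fderiv_comm_left (hf : ContDiffAt ℝ 3 f x) (a b : E) :
    fderiv ℝ (fderiv ℝ (fderiv ℝ f)) x a b = fderiv ℝ (fderiv ℝ (fderiv ℝ f)) x b a :=
  ((hf.fderiv_right (m := 2) (by norm_num)).isSymmSndFDerivAt (by simp)).eq a b

theorem fderiv_fderiv_fderiv_comm_right (hf : ContDiffAt ℝ 3 f x) (a b c : E) :
    fderiv ℝ (fderiv ℝ (fderiv ℝ f)) x a b c = fderiv ℝ (fderiv ℝ (fderiv ℝ f)) x a c b := by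
  have hsymm : fderiv ℝ (fderiv ℝ f) =ᶠ[𝓝 x] flipₗᵢ ℝ E E F ∘ fderiv ℝ (fderiv ℝ f) := by
    filter_upwards [hf.eventually (by simp)] with y hy
    ext b c
    exact (hy.isSymmSndFDerivAt (by norm_num)).eq b c
  have hflip := LinearIsometryEquiv.comp_fderiv (𝕜 := ℝ) (E := E →L[ℝ] E →L[ℝ] F)
    (F := E →L[ℝ] E →L[ℝ] F) (flipₗᵢ ℝ E E F) (f := fderiv ℝ (fderiv ℝ f)) (x := x)
  rw [← hsymm.fderiv_eq] at hflip
  exact congrArg (fun L => L a b c) hflip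

end ContDiffAt

theorem trilinear_split_of_euler {k P c : ℝ} {v X : E} {D₁ : E →L[ℝ] ℝ}
    {D₂ : E →L[ℝ] E →L[ℝ] ℝ} {D₃ : E →L[ℝ] E →L[ℝ] E →L[ℝ] ℝ}
    (h₁ : D₁ v = k * P) (h₂ : D₂ v = (k - 1) • D₁) (h₃ : D₃ v = (k - 2) • D₂)
    (hcomm₁₂ : ∀ a b, D₃ a b = D₃ b a) (hcomm₂₃ : ∀ a b c, D₃ a b c = D₃ a c b)
    (hc : D₁ X = c * (k * P)) :
    D₃ X X X = D₃ (X - c • v) (X - c • v) (X - c • v)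
      + 3 * (k - 2) * c * D₂ (X - c • v) (X - c • v) + (k - 1) * (k - 2) * (k * P) * c ^ 3 := by
  set Y := X - c • v
  have hX : X = Y + c • v := (sub_add_cancel X (c • v)).symm
  have hY : D₁ Y = 0 := by simp [Y, hc, h₁]
  have hvYY : D₃ v Y Y = (k - 2) * D₂ Y Y := by simp [h₃]
  have hvvY : D₃ v v Y = 0 := by simp [h₃, h₂, hY]
  have hvvv : D₃ v v v = (k - 2) * ((k - 1) * (k * P)) := by simp [h₃, h₂, h₁]
  have hYvY : D₃ Y v Y = D₃ v Y Y := by rw [hcomm₁₂]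
  have hYYv : D₃ Y Y v = D₃ v Y Y := by rw [hcomm₂₃, hcomm₁₂]
  have hvYv : D₃ v Y v = D₃ v v Y := hcomm₂₃ v Y v
  have hYvv : D₃ Y v v = D₃ v v Y := by rw [hcomm₁₂, hcomm₂₃]
  rw [hX]
  simp only [map_add, map_smul, add_apply, smul_apply, smul_eq_mul]
  rw [hYvY, hYYv, hvYv, hYvv, hvYY, hvvY, hvvv]
  ring

/-- Splitting of the third differential of a homogeneous function along `ker Θ₁` and the
radial direction: with `X₀ = X − (Df(v)(X)/(k·f(v)))·v`,
`D³f(v)(X,X,X) = D³f(v)(X₀,X₀,X₀) + (3(k−2)/(k·f(v)))·D²f(v)(X₀,X₀)·Df(v)(X)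
  + ((k−1)(k−2)/(k·f(v))²)·(Df(v)(X))³`. -/
theorem third_differential_splitting (n : ℕ) (k : ℝ) (f : (Fin n → ℝ) → ℝ)
    (hf : ContDiffOn ℝ 3 f {x | x ≠ 0})
    (hhom : ∀ t : ℝ, 0 < t → ∀ x : Fin n → ℝ, x ≠ 0 → f (t • x) = t ^ k * f x)
    (v : Fin n → ℝ) (hv : v ≠ 0) (hkf : k * f v ≠ 0) (X : Fin n → ℝ) :
    iteratedFDeriv ℝ 3 f v ![X, X, X] =
      iteratedFDeriv ℝ 3 f v
        ![X - (fderiv ℝ f v X / (k * f v)) • v, X - (fderiv ℝ f v X / (k * f v)) • v,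
          X - (fderiv ℝ f v X / (k * f v)) • v] +
      (3 * (k - 2) / (k * f v)) *
        iteratedFDeriv ℝ 2 f v
          ![X - (fderiv ℝ f v X / (k * f v)) • v, X - (fderiv ℝ f v X / (k * f v)) • v] *
        fderiv ℝ f v X +
      ((k - 1) * (k - 2) / (k * f v) ^ 2) * (fderiv ℝ f v X) ^ 3 := by
  have hv' : {x : Fin n → ℝ | x ≠ 0} ∈ 𝓝 v := isOpen_ne.mem_nhds hv
  have hf₁ := hf.fderiv_of_isOpen isOpen_ne (m := 2) (by norm_num)
  have hd₀ := hf.differentiableOn (by norm_num)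
  have hd₁ := hf₁.differentiableOn (by norm_num)
  have hd₂ := (hf₁.fderiv_of_isOpen isOpen_ne (m := 1) (by norm_num)).differentiableOn one_ne_zero
  have hom₀ : IsPosHomogeneous k f := hhom
  have hom₁ := hom₀.fderiv hd₀
  have hom₂ : IsPosHomogeneous (k - 2) (fderiv ℝ (fderiv ℝ f)) := by
    convert hom₁.fderiv hd₁ using 1
    ring
  have hfv : ContDiffAt ℝ 3 f v := hf.contDiffAt hv'
  have hc : fderiv ℝ f v X = fderiv ℝ f v X / (k * f v) * (k * f v) :=
    (div_mul_cancel₀ _ hkf).symm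
  simp only [iteratedFDeriv_three_apply, iteratedFDeriv_two_apply, Matrix.cons_val_zero,
    Matrix.cons_val_one, Matrix.cons_val_two, Matrix.tail_cons, Matrix.head_cons]
  rw [trilinear_split_of_euler
    (hom₀.fderiv_apply_self hv (hd₀.differentiableAt hv'))
    (hom₁.fderiv_apply_self hv (hd₁.differentiableAt hv'))
    (hom₂.fderiv_apply_self hv (hd₂.differentiableAt hv'))
    hfv.fderiv_fderiv_fderiv_comm_left hfv.fderiv_fderiv_fderiv_comm_right hc]
  field_simp
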